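/- Let C be a monoidal groupoid with chosen right duals, and let d : Star(C) → C₀ be given by d(x, f) := x. Then: (1) d is a c-group morphism; (2) d(r·(x, f)) = r ⊗ (d(x, f) ⊗ rᘁ), i.e. ∂(b·a) = b + (∂(a) + (−b)) holds as an equality; (3) for all (x, f), (y, g) ∈ Star(C) one has d(x, f)·(y, g) ∼ (x, f) + ((y, g) + (−(x, f))); and (4) Star(C) is connected. Hence (Star(C), C₀, d) is a connected c-crossed module. -/

import Mathlib

open CategoryTheory MonoidalCategory

/-- The data of a c-group: a relation, an addition, a zero and a negation. -/
structure CGroupData (G : Type*) where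
  rel : G → G → Prop
  add : G → G → G
  zero : G
  neg : G → G

variable (C : Type*) [Groupoid C] [MonoidalCategory C] [RightRigidCategory C]

/-- The c-group `C₀` of objects: relation `x ∼ y` iff `x ≅ y`, addition `⊗`,
zero `𝟙_C`, negation `x ↦ xᘁ`. -/
def objectsCGroupData : CGroupData C where
  rel x y := Nonempty (x ≅ y)
  add x y := x ⊗ y
  zero := 𝟙_ C
  neg x := xᘁ

/-- `Star(C)`: pairs `(x, f)` with `f : 𝟙_C ⟶ x`. -/
abbrev StarC := Σ x : C, (𝟙_ C ⟶ x)

/-- The c-group structure on `Star(C)`. -/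
def starCGroupData : CGroupData (StarC C) where
  rel p q := ∃ (θ₀ : 𝟙_ C ≅ 𝟙_ C) (θ₁ : p.1 ≅ q.1), p.2 ≫ θ₁.hom = θ₀.hom ≫ q.2
  add p q := ⟨p.1 ⊗ q.1, (λ_ (𝟙_ C)).inv ≫ (p.2 ⊗ₘ q.2)⟩
  zero := ⟨𝟙_ C, 𝟙 (𝟙_ C)⟩
  neg p := ⟨(p.1 : C)ᘁ, η_ p.1 ((p.1 : C)ᘁ) ≫ (Groupoid.inv p.2 ⊗ₘ 𝟙 ((p.1 : C)ᘁ)) ≫ (λ_ ((p.1 : C)ᘁ)).hom⟩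

variable {C}

/-- `γ_r := η_r ≫ (𝟙_r ⊗ (λ_{rᘁ})⁻¹) : 𝟙_C ⟶ r ⊗ (𝟙_C ⊗ rᘁ)`. -/
def gammaC (r : C) : 𝟙_ C ⟶ r ⊗ (𝟙_ C ⊗ rᘁ) :=
  η_ r (rᘁ) ≫ (𝟙 r ⊗ₘ (λ_ (rᘁ)).inv)

/-- The action `r·(x, f) := (r ⊗ (x ⊗ rᘁ), γ_r ≫ (𝟙_r ⊗ (f ⊗ 𝟙_{rᘁ})))` of the objects
on `Star(C)`. -/
def actStar (r : C) (p : StarC C) : StarC C :=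
  ⟨r ⊗ (p.1 ⊗ rᘁ), gammaC r ≫ (𝟙 r ⊗ₘ (p.2 ⊗ₘ 𝟙 (rᘁ)))⟩

/-- The boundary map `d : Star(C) → C₀`, `d(x, f) := x`. -/
def dStar (p : StarC C) : C := p.1

/-- Any two elements of `Star(C)` are related. -/
lemma starC_connected (p q : StarC C) : (starCGroupData C).rel p q :=
  ⟨Iso.refl _,
    ⟨Groupoid.inv p.2 ≫ q.2, Groupoid.inv q.2 ≫ p.2, by simp, by simp⟩, by simp⟩

/-- `(Star(C), C₀, d)` is a connected c-crossed module: `d` is a c-group morphism,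
`d(r·(x,f)) = r ⊗ (d(x,f) ⊗ rᘁ)`, `d(x,f)·(y,g) ∼ (x,f) + ((y,g) + (−(x,f)))`, and
`Star(C)` is connected. -/
theorem starC_cCrossedModule :
    -- (1) `d` is a c-group morphism
    (∀ p q : StarC C, dStar ((starCGroupData C).add p q) =
      (objectsCGroupData C).add (dStar p) (dStar q)) ∧
    (∀ p q : StarC C, (starCGroupData C).rel p q →
      (objectsCGroupData C).rel (dStar p) (dStar q)) ∧
    -- (2) `∂(b·a) = b + (∂(a) + (−b))` holds as an equality
    (∀ (r : C) (p : StarC C), dStar (actStar r p) =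
      (objectsCGroupData C).add r
        ((objectsCGroupData C).add (dStar p) ((objectsCGroupData C).neg r))) ∧
    -- (3) `∂(a)·a₁ ∼ a + (a₁ + (−a))`
    (∀ p q : StarC C, (starCGroupData C).rel (actStar (dStar p) q)
      ((starCGroupData C).add p
        ((starCGroupData C).add q ((starCGroupData C).neg p)))) ∧
    -- (4) `Star(C)` is connected
    (∀ p q : StarC C, (starCGroupData C).rel p q) :=
  ⟨fun _ _ => rfl, fun _ _ ⟨_, θ₁, _⟩ => ⟨θ₁⟩, fun _ _ => rfl,
    fun p q => starC_connected _ _, fun p q => starC_connected p q⟩
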